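/- arXiv:1710.08480 — 2 statements merged into one kernel-verified Lean document; each statement's English description precedes it below -/
import Mathlib

section
/- For every n ≥ 2 and every S-path s of order n with associated tile sequence t₀, …, t_{T_n−1} (the m-th edge of s is a side of dark tile t_m), the centroids of consecutive tiles differ by a unit grid vector: for each m there exists d_m ∈ Fin 6 with centroid(t_{m+1}) = centroid(t_m) + u(d_m). Moreover, the resulting direction word (d₀, …, d_{T_n−2}) is a W-path of order n (its position sequence, started at 0, is injective with image G_n, it goes from P(0,0) to P(n−1,0), and its supplemented word 0·w·0 contains no forbidden turn). -/
/-- The unit vector in direction `d·π/3`, viewing the plane as `ℂ`. -/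
noncomputable def dirU (d : Fin 6) : ℂ :=
  Complex.exp ((d : ℕ) * Real.pi / 3 * Complex.I)

/-- The position sequence of a direction word: `p₀ = 0`, `p_{m+1} = p_m + dirU (ds_m)`. -/
noncomputable def posSeq (ds : List (Fin 6)) (m : ℕ) : ℂ :=
  ((ds.take m).map dirU).sum

/-- The grid point `P(i,j) = i·u(0) + j·u(1)`. -/
noncomputable def Pt (i j : ℕ) : ℂ := (i : ℂ) * dirU 0 + (j : ℂ) * dirU 1

/-- The triangular number `T_n = n(n+1)/2`. -/
def triNum (n : ℕ) : ℕ := n * (n + 1) / 2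

/-- The inscribed grid `G_n = {P(i,j) : i + j ≤ n - 1}`. -/
def inscribedGrid (n : ℕ) : Set ℂ := {p | ∃ i j : ℕ, i + j ≤ n - 1 ∧ p = Pt i j}

/-- An H-path of order `n`: a direction word of length `T_n - 1` whose position sequence
is injective with image `G_n`, starting at `P(0,0) = 0` and ending at `P(n-1,0)`. -/
def IsHPath (n : ℕ) (w : List (Fin 6)) : Prop :=
  w.length = triNum n - 1 ∧
  (Function.Injective fun m : Fin (w.length + 1) => posSeq w m) ∧
  (Set.range fun m : Fin (w.length + 1) => posSeq w m) = inscribedGrid n ∧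
  posSeq w 0 = Pt 0 0 ∧
  posSeq w w.length = Pt (n - 1) 0

/-- `(a, b)` is a forbidden turn if `b ≡ a + 4 (mod 6)` with `a` even, or
`b ≡ a + 2 (mod 6)` with `a` odd (addition in `Fin 6` is mod 6). -/
def ForbiddenTurn (a b : Fin 6) : Prop :=
  (Even (a : ℕ) ∧ b = a + 4) ∨ (Odd (a : ℕ) ∧ b = a + 2)

/-- A W-path of order `n`: an H-path whose supplemented word `0·w·0` contains no
forbidden turn among its consecutive pairs. -/
def IsWPath (n : ℕ) (w : List (Fin 6)) : Prop :=
  IsHPath n w ∧ List.Chain' (fun a b => ¬ ForbiddenTurn a b) ((0 : Fin 6) :: (w ++ [0]))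

/-- The `m`-th edge of a direction word: the closed segment `[p_m, p_{m+1}]`. -/
noncomputable def edgeSeg (s : List (Fin 6)) (m : ℕ) : Set ℂ :=
  segment ℝ (posSeq s m) (posSeq s (m + 1))

/-- `e` is a side of the dark (upward) tile `Δ(i,j)`, i.e. one of its three closed edges. -/
def IsSideOf (e : Set ℂ) (i j : ℕ) : Prop :=
  e = segment ℝ (Pt i j) (Pt (i + 1) j) ∨
  e = segment ℝ (Pt (i + 1) j) (Pt i (j + 1)) ∨
  e = segment ℝ (Pt i j) (Pt i (j + 1))

/-- An S-path of order `n`: a direction word of length `T_n` from `0` to `n·u(0)`,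
whose edges are pairwise distinct sides of dark tiles, such that the assignment of
edges to dark tiles is a bijection onto the set of dark tiles (indexed by base points
`(i,j)` with `i + j ≤ n - 1`). -/
def IsSPath (n : ℕ) (s : List (Fin 6)) : Prop :=
  s.length = triNum n ∧
  posSeq s 0 = 0 ∧
  posSeq s s.length = (n : ℂ) * dirU 0 ∧
  (∀ m m' : Fin s.length, edgeSeg s m = edgeSeg s m' → m = m') ∧
  ∃ t : Fin s.length → {p : ℕ × ℕ // p.1 + p.2 ≤ n - 1},
    (∀ m : Fin s.length, IsSideOf (edgeSeg s (m : ℕ)) (t m).1.1 (t m).1.2) ∧ Function.Bijective t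

/-- The centroid of the dark tile `Δ(i,j)`. -/
noncomputable def centroidUp (i j : ℕ) : ℂ := Pt i j + (dirU 0 + dirU 1) / 3

/-!
In the lattice coordinates of the basis `u(0), u(1)`, dark tiles are indexed by their base
points and their vertices are the base point plus `(0,0)`, `(1,0)` or `(0,1)`. Consecutive
edges of the S-path share a vertex, so consecutive tiles are distinct dark tiles with a common
vertex; their base points, hence their centroids, differ by one of the six unit vectors. As the
tile sequence runs through every dark tile exactly once, from `Δ(0,0)` (which contains `0`) to
`Δ(n-1,0)` (which contains `n·u(0)`), the centroid word is an H-path. A forbidden turn at tiles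
`t_m, t_{m+1}, t_{m+2}` would make the corner `p_{m+1}` shared by the first two equal to the
corner `p_{m+2}` shared by the last two, collapsing the edge `[p_{m+1}, p_{m+2}]`. The turns
against the supplementary letters `0` are forbidden only for a first letter `4` or a last
letter `2`, which would put the second, resp. the second-to-last, tile below the base line.
-/

theorem endpoints_eq_of_segment_eq {R V : Type*} [Field R] [LinearOrder R] [IsStrictOrderedRing R]
    [AddCommGroup V] [Module R V] {a b c d : V} (h : segment R a b = segment R c d) :
    a = c ∧ b = d ∨ a = d ∧ b = c := by
  have hc : Wbtw R a c b := mem_segment_iff_wbtw.1 (h ▸ left_mem_segment R c d)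
  have hd : Wbtw R a d b := mem_segment_iff_wbtw.1 (h ▸ right_mem_segment R c d)
  have ha : Wbtw R c a d := mem_segment_iff_wbtw.1 (h.symm ▸ left_mem_segment R a b)
  have hb : Wbtw R c b d := mem_segment_iff_wbtw.1 (h.symm ▸ right_mem_segment R a b)
  by_cases had : a = d
  · exact Or.inr ⟨had, (hc.swap_right_iff.1 (had ▸ hb.symm)).symm⟩
  by_cases hbc : b = c
  · exact Or.inr ⟨(hd.symm.swap_right_iff.1 (hbc ▸ ha)).symm, hbc⟩
  exact Or.inl ⟨hc.swap_left_iff.1 (ha.trans_expand_left hd had),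
    hd.symm.swap_left_iff.1 (hb.symm.trans_expand_left hc.symm hbc)⟩

open Complex in
theorem dirU_one : dirU 1 = ⟨1 / 2, √3 / 2⟩ := by
  have : dirU 1 = exp ((Real.pi / 3 : ℝ) * I) := by
    rw [dirU, Fin.val_one]; push_cast; ring_nf
  rw [this]
  apply Complex.ext
  · rw [exp_ofReal_mul_I_re, Real.cos_pi_div_three]
  · rw [exp_ofReal_mul_I_im, Real.sin_pi_div_three]

theorem dirU_one_sq : dirU 1 ^ 2 = dirU 1 - 1 := by
  have h3 : √3 * √3 = 3 := Real.mul_self_sqrt (by norm_num)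
  rw [dirU_one]
  apply Complex.ext <;> simp [sq] <;> linarith

theorem dirU_eq_pow (d : Fin 6) : dirU d = dirU 1 ^ (d : ℕ) := by
  rw [dirU, dirU, ← Complex.exp_nat_mul]
  simp only [Fin.val_one, Nat.cast_one]
  ring_nf

noncomputable def latPt : ℤ × ℤ →+ ℂ where
  toFun v := v.1 + v.2 * dirU 1
  map_zero' := by simp
  map_add' v w := by simp only [Prod.fst_add, Prod.snd_add]; push_cast; ring

theorem latPt_apply (v : ℤ × ℤ) : latPt v = v.1 + v.2 * dirU 1 := rfl

theorem latPt_injective : Function.Injective latPt := by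
  refine (injective_iff_map_eq_zero latPt).2 fun v hv => ?_
  have hre := congrArg Complex.re hv
  have him := congrArg Complex.im hv
  simp [latPt_apply, dirU_one] at hre him
  ext <;> simp_all

def dirVec : Fin 6 → ℤ × ℤ := ![(1, 0), (0, 1), (-1, 1), (-1, 0), (0, -1), (1, -1)]

theorem latPt_dirVec (d : Fin 6) : latPt (dirVec d) = dirU d := by
  have h := dirU_one_sq
  rw [dirU_eq_pow]
  fin_cases d <;> simp [dirVec, latPt_apply]
  · linear_combination -h
  · linear_combination -(dirU 1 + 1) * h
  · linear_combination -(dirU 1 ^ 2 + dirU 1) * h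
  · linear_combination -(dirU 1 ^ 3 + dirU 1 ^ 2 - 1) * h

def corner : Fin 3 → ℤ × ℤ := ![(0, 0), (1, 0), (0, 1)]

def IsTileSide (p x y : ℤ × ℤ) : Prop :=
  ∃ k k', k ≠ k' ∧ x = p + corner k ∧ y = p + corner k'

theorem exists_dirVec_eq_corner_sub_corner {k l : Fin 3} (h : k ≠ l) :
    ∃ d, corner k - corner l = dirVec d := by
  revert k l; decide

theorem corner_eq_of_sub_eq_sub {k k' l l' : Fin 3} (hk : k ≠ k')
    (h : corner k - corner l = corner k' - corner l') : corner k = corner l := by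
  revert k k' l l'; decide

/-- Along a forbidden turn `a, b`, tile `p + dirVec a` meets its predecessor `p` and its
successor `p + dirVec a + dirVec b` in the same corner. -/
theorem ForbiddenTurn.shared_corner_eq {a b : Fin 6} (hab : ForbiddenTurn a b)
    {k₀ k₁ k₁' k₂ : Fin 3} (h₁ : corner k₀ = dirVec a + corner k₁)
    (h₂ : corner k₁' = dirVec b + corner k₂) : k₁ = k₁' := by
  revert a b k₀ k₁ k₁' k₂; unfold ForbiddenTurn; decide

theorem forbiddenTurn_zero_left_iff (b : Fin 6) : ForbiddenTurn 0 b ↔ b = 4 := by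
  revert b; unfold ForbiddenTurn; decide

theorem forbiddenTurn_zero_right_iff (a : Fin 6) : ForbiddenTurn a 0 ↔ a = 2 := by
  revert a; unfold ForbiddenTurn; decide

namespace IsTileSide

variable {p q x y z : ℤ × ℤ}

theorem tile_unique (h : IsTileSide p x y) (h' : IsTileSide q x y) : p = q := by
  obtain ⟨k, k', hk, rfl, rfl⟩ := h
  obtain ⟨l, l', -, hl, hl'⟩ := h'
  have := corner_eq_of_sub_eq_sub (l := l) (l' := l') hk (by linear_combination hl - hl')
  linear_combination hl - this

theorem exists_dirVec (h : IsTileSide p x y) (h' : IsTileSide q y z) (hpq : p ≠ q) :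
    ∃ d, q = p + dirVec d := by
  obtain ⟨-, k, -, -, rfl⟩ := h
  obtain ⟨l, -, -, hl, -⟩ := h'
  have hkl : k ≠ l := by rintro rfl; exact hpq (add_right_cancel hl)
  obtain ⟨d, hd⟩ := exists_dirVec_eq_corner_sub_corner hkl
  exact ⟨d, by linear_combination hd - hl⟩

theorem not_forbiddenTurn {a b : Fin 6} {w : ℤ × ℤ} (h₀ : IsTileSide p x y)
    (h₁ : IsTileSide (p + dirVec a) y z) (h₂ : IsTileSide (p + dirVec a + dirVec b) z w) :
    ¬ ForbiddenTurn a b := by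
  intro hab
  obtain ⟨-, k₀, -, -, rfl⟩ := h₀
  obtain ⟨k₁, k₁', hk, hk₁, rfl⟩ := h₁
  obtain ⟨k₂, -, -, hk₂, -⟩ := h₂
  exact hk (hab.shared_corner_eq (k₀ := k₀) (k₂ := k₂) (by linear_combination hk₁)
    (by linear_combination hk₂))

end IsTileSide

section TileWalk

variable {T v : ℕ → ℤ × ℤ}

theorem exists_dirVec_seq {N : ℕ} (hside : ∀ m < N, IsTileSide (T m) (v m) (v (m + 1)))
    (hne : ∀ m, m + 1 < N → T m ≠ T (m + 1)) :
    ∃ D : ℕ → Fin 6, ∀ m, m + 1 < N → T (m + 1) = T m + dirVec (D m) := by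
  have : ∀ m, ∃ d, m + 1 < N → T (m + 1) = T m + dirVec d := fun m => by
    by_cases hm : m + 1 < N
    · obtain ⟨d, hd⟩ := (hside m (by omega)).exists_dirVec (hside (m + 1) hm) (hne m hm)
      exact ⟨d, fun _ => hd⟩
    · exact ⟨0, fun h => absurd h hm⟩
  choose D hD using this
  exact ⟨D, hD⟩

theorem isChain_of_isTileSide {u : List (Fin 6)}
    (hside : ∀ m < u.length + 1, IsTileSide (T m) (v m) (v (m + 1)))
    (hstep : ∀ m (hm : m < u.length), T (m + 1) = T m + dirVec u[m]) :
    u.IsChain fun a b => ¬ ForbiddenTurn a b := by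
  refine List.isChain_iff_getElem.2 fun m hm => (hside m (by omega)).not_forbiddenTurn
    (z := v (m + 2)) (w := v (m + 3)) ?_ ?_
  · rw [← hstep m (by omega)]
    exact hside (m + 1) (by omega)
  · rw [← hstep m (by omega), ← hstep (m + 1) hm]
    exact hside (m + 2) (by omega)

end TileWalk

def latticePos (ds : List (Fin 6)) (m : ℕ) : ℤ × ℤ := ((ds.take m).map dirVec).sum

theorem posSeq_eq_latPt (ds : List (Fin 6)) (m : ℕ) : posSeq ds m = latPt (latticePos ds m) := by
  simp [posSeq, latticePos, map_list_sum, List.map_map, Function.comp_def, latPt_dirVec]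

theorem latticePos_eq_of_step {w : List (Fin 6)} {T : ℕ → ℤ × ℤ} (h₀ : T 0 = 0)
    (hstep : ∀ m (hm : m < w.length), T (m + 1) = T m + dirVec w[m]) :
    ∀ m ≤ w.length, latticePos w m = T m
  | 0, _ => by simp [latticePos, h₀]
  | m + 1, hm => by
    rw [hstep m hm, ← latticePos_eq_of_step h₀ hstep m (by omega), latticePos, latticePos,
      List.take_add_one, List.map_append, List.sum_append]
    simp [List.getElem?_eq_getElem hm]

def intPair (p : ℕ × ℕ) : ℤ × ℤ := (p.1, p.2)

theorem intPair_injective : Function.Injective intPair := fun p q h => by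
  simp only [intPair, Prod.mk.injEq, Nat.cast_inj] at h
  exact Prod.ext h.1 h.2

theorem Pt_eq_latPt (p : ℕ × ℕ) : Pt p.1 p.2 = latPt (intPair p) := by
  simp [Pt, latPt_apply, intPair, dirU]

theorem Pt_injective : Function.Injective fun p : ℕ × ℕ => Pt p.1 p.2 := fun p q h => by
  simp only [Pt_eq_latPt] at h
  exact intPair_injective (latPt_injective h)

theorem centroidUp_eq_add_dirU {p q : ℕ × ℕ} {d : Fin 6} (h : intPair q = intPair p + dirVec d) :
    centroidUp q.1 q.2 = centroidUp p.1 p.2 + dirU d := by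
  rw [centroidUp, centroidUp, Pt_eq_latPt, Pt_eq_latPt, h, map_add, latPt_dirVec]
  ring

theorem IsSideOf.exists_corners {e : Set ℂ} {p : ℕ × ℕ} (h : IsSideOf e p.1 p.2) :
    ∃ k k', k ≠ k' ∧
      e = segment ℝ (latPt (intPair p + corner k)) (latPt (intPair p + corner k')) := by
  have hPt : ∀ i j : ℕ, Pt i j = latPt (i, j) := fun i j => Pt_eq_latPt (i, j)
  rcases h with rfl | rfl | rfl
  · exact ⟨0, 1, by decide, by simp [hPt, intPair, corner]⟩
  · exact ⟨1, 2, by decide, by simp [hPt, intPair, corner]⟩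
  · exact ⟨0, 2, by decide, by simp [hPt, intPair, corner]⟩

theorem isTileSide_of_isSideOf {x y : ℤ × ℤ} {p : ℕ × ℕ}
    (h : IsSideOf (segment ℝ (latPt x) (latPt y)) p.1 p.2) : IsTileSide (intPair p) x y := by
  obtain ⟨k, k', hk, he⟩ := h.exists_corners
  rcases endpoints_eq_of_segment_eq he with ⟨hx, hy⟩ | ⟨hx, hy⟩
  · exact ⟨k, k', hk, latPt_injective hx, latPt_injective hy⟩
  · exact ⟨k', k, hk.symm, latPt_injective hx, latPt_injective hy⟩

theorem IsSPath.three_le_length {n : ℕ} {s : List (Fin 6)} (hs : IsSPath n s) (hn : 2 ≤ n) :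
    3 ≤ s.length := by
  rw [hs.1, triNum]
  have := Nat.mul_le_mul hn (show 3 ≤ n + 1 by omega)
  omega

def IsTileSeq (n : ℕ) (s : List (Fin 6)) (t : ℕ → ℕ × ℕ) : Prop :=
  ∀ m < s.length, (t m).1 + (t m).2 ≤ n - 1 ∧ IsSideOf (edgeSeg s m) (t m).1 (t m).2

namespace IsTileSeq

variable {n : ℕ} {s : List (Fin 6)} {t : ℕ → ℕ × ℕ}

theorem isTileSide (ht : IsTileSeq n s t) :
    ∀ m < s.length, IsTileSide (intPair (t m)) (latticePos s m) (latticePos s (m + 1)) :=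
  fun m hm => isTileSide_of_isSideOf <| by
    simpa only [edgeSeg, posSeq_eq_latPt] using (ht m hm).2

theorem bijOn (hs : IsSPath n s) (ht : IsTileSeq n s t) :
    Set.BijOn t (Set.Iio s.length) {p | p.1 + p.2 ≤ n - 1} := by
  obtain ⟨-, -, -, -, τ, hτ, hτinj, hτsurj⟩ := hs
  have htτ : ∀ m (hm : m < s.length), t m = τ ⟨m, hm⟩ := fun m hm => by
    refine intPair_injective ((ht.isTileSide m hm).tile_unique ?_)
    exact isTileSide_of_isSideOf (by simpa only [edgeSeg, posSeq_eq_latPt] using hτ ⟨m, hm⟩)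
  refine ⟨fun m hm => (ht m hm).1, fun m hm m' hm' h => ?_, fun p hp => ?_⟩
  · rw [htτ m hm, htτ m' hm'] at h
    exact congrArg Fin.val (hτinj (Subtype.ext h))
  · obtain ⟨⟨m, hm⟩, hmp⟩ := hτsurj ⟨p, hp⟩
    exact ⟨m, hm, by rw [htτ m hm, hmp]⟩

theorem apply_zero (ht : IsTileSeq n s t) (hs : 0 < s.length) : t 0 = (0, 0) := by
  obtain ⟨k, -, -, h, -⟩ := ht.isTileSide 0 hs
  simp only [latticePos, List.take_zero, List.map_nil, List.sum_nil] at h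
  rw [Prod.ext_iff] at h ⊢
  fin_cases k <;> simp [corner, intPair] at h ⊢ <;> omega

theorem apply_length_sub_one (hs : IsSPath n s) (ht : IsTileSeq n s t) (hL : 0 < s.length) :
    t (s.length - 1) = (n - 1, 0) := by
  obtain ⟨-, -, hend, -⟩ := hs
  have hend' : latticePos s s.length = ((n : ℤ), 0) := latPt_injective <| by
    rw [← posSeq_eq_latPt, hend]
    simp [latPt_apply, dirU]
  obtain ⟨-, k, -, -, h⟩ := ht.isTileSide (s.length - 1) (by omega)
  have hsum := (ht (s.length - 1) (by omega)).1
  rw [Nat.sub_add_cancel hL, hend', Prod.ext_iff] at h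
  rw [Prod.ext_iff]
  fin_cases k <;> simp [corner, intPair] at h ⊢ <;> omega

end IsTileSeq

section DirectionWord

variable {n : ℕ} {w : List (Fin 6)} {t : ℕ → ℕ × ℕ}

theorem isHPath_of_bijOn (hlen : w.length = triNum n - 1)
    (hbij : Set.BijOn t (Set.Iio (w.length + 1)) {p | p.1 + p.2 ≤ n - 1})
    (h₀ : t 0 = (0, 0)) (hlast : t w.length = (n - 1, 0))
    (hstep : ∀ m (hm : m < w.length), intPair (t (m + 1)) = intPair (t m) + dirVec w[m]) :
    IsHPath n w := by
  have hpos : ∀ m ≤ w.length, posSeq w m = Pt (t m).1 (t m).2 := fun m hm => by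
    rw [posSeq_eq_latPt, Pt_eq_latPt,
      latticePos_eq_of_step (T := intPair ∘ t) (by simp [h₀, intPair]) hstep m hm, Function.comp]
  refine ⟨hlen, fun m m' h => ?_, ?_, by rw [hpos 0 (Nat.zero_le _), h₀],
    by rw [hpos _ le_rfl, hlast]⟩
  · simp only [hpos m (Nat.lt_succ_iff.1 m.2), hpos m' (Nat.lt_succ_iff.1 m'.2)] at h
    exact Fin.ext (hbij.injOn m.2 m'.2 (Pt_injective h))
  · ext z
    constructor
    · rintro ⟨m, rfl⟩
      exact ⟨_, _, hbij.mapsTo m.2, hpos m (Nat.lt_succ_iff.1 m.2)⟩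
    · rintro ⟨i, j, hij, rfl⟩
      obtain ⟨m, hm, hmt⟩ := hbij.surjOn (show (i, j) ∈ {p : ℕ × ℕ | p.1 + p.2 ≤ n - 1} from hij)
      exact ⟨⟨m, hm⟩, by simp only [hpos m (Nat.lt_succ_iff.1 hm), hmt]⟩

theorem isChain_zero_cons_append_zero {v : ℕ → ℤ × ℤ} (hw : w ≠ [])
    (hside : ∀ m < w.length + 1, IsTileSide (intPair (t m)) (v m) (v (m + 1)))
    (h₀ : (t 0).2 = 0) (hlast : (t w.length).2 = 0)
    (hstep : ∀ m (hm : m < w.length), intPair (t (m + 1)) = intPair (t m) + dirVec w[m]) :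
    ((0 : Fin 6) :: (w ++ [0])).IsChain fun a b => ¬ ForbiddenTurn a b := by
  have hw₀ : 0 < w.length := List.length_pos_iff.2 hw
  rw [← List.cons_append, List.isChain_append, List.isChain_cons]
  simp only [List.head?_eq_some_head hw, List.getLast?_cons, List.getLast?_eq_some_getLast hw,
    Option.getD_some, List.head?_cons, Option.mem_def, Option.some.injEq, forall_eq',
    List.isChain_singleton, true_and, List.head_eq_getElem, List.getLast_eq_getElem]
  refine ⟨⟨fun h => ?_, isChain_of_isTileSide hside hstep⟩, fun h => ?_⟩
  · have h' := congrArg Prod.snd (hstep 0 hw₀)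
    rw [(forbiddenTurn_zero_left_iff _).1 h] at h'
    simp [intPair, dirVec] at h'
    omega
  · have h' := congrArg Prod.snd (hstep (w.length - 1) (by omega))
    rw [(forbiddenTurn_zero_right_iff _).1 h, Nat.sub_add_cancel hw₀] at h'
    simp [intPair, dirVec] at h'
    omega

end DirectionWord

/-- For every `n ≥ 2`, every S-path `s` of order `n` and every associated
tile sequence `t` (the `m`-th edge of `s` is a side of the dark tile `t m`), centroids of
consecutive tiles differ by a unit grid vector, and the resulting direction word of length
`T_n - 1` is a W-path of order `n`. -/
theorem sPath_centroids_give_wPath (n : ℕ) (hn : 2 ≤ n) (s : List (Fin 6))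
    (hs : IsSPath n s) (t : ℕ → ℕ × ℕ)
    (ht : ∀ m < s.length, (t m).1 + (t m).2 ≤ n - 1 ∧
      IsSideOf (edgeSeg s m) (t m).1 (t m).2) :
    (∀ m, m + 1 < s.length → ∃ d : Fin 6,
        centroidUp (t (m + 1)).1 (t (m + 1)).2 = centroidUp (t m).1 (t m).2 + dirU d) ∧
    ∃ w : List (Fin 6), w.length = s.length - 1 ∧
      (∀ m < s.length - 1,
        centroidUp (t (m + 1)).1 (t (m + 1)).2
          = centroidUp (t m).1 (t m).2 + dirU (w.getD m 0)) ∧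
      IsWPath n w := by
  have ht : IsTileSeq n s t := ht
  have hL := hs.three_le_length hn
  have hbij := ht.bijOn hs
  obtain ⟨D, hD⟩ := exists_dirVec_seq ht.isTileSide fun m hm =>
    intPair_injective.ne ((hbij.injOn.ne_iff (Set.mem_Iio.2 (by omega)) (Set.mem_Iio.2 hm)).2
      (by omega))
  set w := (List.range (s.length - 1)).map D
  have hwlen : w.length = s.length - 1 := by simp [w]
  have hstep : ∀ m (hm : m < w.length), intPair (t (m + 1)) = intPair (t m) + dirVec w[m] :=
    fun m hm => by simpa [w] using hD m (by omega)
  have hlast : t w.length = (n - 1, 0) := hwlen ▸ ht.apply_length_sub_one hs (by omega)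
  refine ⟨fun m hm => ⟨D m, centroidUp_eq_add_dirU (hD m hm)⟩, w, hwlen, fun m hm => ?_, ?_, ?_⟩
  · rw [List.getD_eq_getElem _ _ (by omega)]
    exact centroidUp_eq_add_dirU (hstep m (by omega))
  · refine isHPath_of_bijOn (by rw [hwlen, hs.1]) ?_ (ht.apply_zero (by omega)) hlast hstep
    rwa [hwlen, Nat.sub_add_cancel (by omega)]
  · exact isChain_zero_cons_append_zero (List.ne_nil_of_length_pos (by omega))
      (fun m hm => ht.isTileSide m (by omega)) (by rw [ht.apply_zero (by omega)])
      (by rw [hlast]) hstep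
end

section
/- For every n ≥ 1, the closed triangle with vertices 0, n·u(0), n·u(1) is the union of the T_n = n(n+1)/2 upward unit tiles Δ(i,j) (i + j ≤ n − 1) and the T_{n−1} = n(n−1)/2 downward unit tiles ∇(i,j) with vertices P(i+1,j), P(i,j+1), P(i+1,j+1) (i + j ≤ n − 2), and these n² tiles have pairwise disjoint interiors. In particular the order-n generator pattern consists of n² = T_n + T_{n−1} coincident subtriangles, T_n of which face upward (dark) and T_{n−1} of which face downward (white). -/
/-- The closed upward unit tile `Δ(i,j)` with vertices `P(i,j)`, `P(i+1,j)`, `P(i,j+1)`. -/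
noncomputable def upTile (i j : ℕ) : Set ℂ :=
  convexHull ℝ {Pt i j, Pt (i + 1) j, Pt i (j + 1)}

/-- The closed downward unit tile `∇(i,j)` with vertices `P(i+1,j)`, `P(i,j+1)`, `P(i+1,j+1)`. -/
noncomputable def downTile (i j : ℕ) : Set ℂ :=
  convexHull ℝ {Pt (i + 1) j, Pt i (j + 1), Pt (i + 1) (j + 1)}

/-- The closed triangle with vertices `0`, `n·u(0)`, `n·u(1)`. -/
noncomputable def bigTri (n : ℕ) : Set ℂ :=
  convexHull ℝ {0, (n : ℂ) * dirU 0, (n : ℂ) * dirU 1}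

/-!
In the oblique coordinates `(a, b) ↦ a + b·u(1)` the grid points `P(i,j)` become `ℤ²`, the big
triangle becomes `{a, b ≥ 0, a + b ≤ n}`, and the tiles `Δ(i,j)`, `∇(i,j)` become the two halves
of the unit square `[i, i+1] × [j, j+1]` cut by its anti-diagonal. A point of the big triangle
therefore lies in a tile of the square `(⌊a⌋, ⌊b⌋)`, and conversely an interior point of a tile
determines `(⌊a⌋, ⌊b⌋)` and hence the tile. The coordinate change is a linear homeomorphism, so
unions and interiors transfer back to `ℂ`.
-/

theorem interior_setOf_le_apply {E : Type*} [AddCommGroup E] [TopologicalSpace E]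
    [ContinuousAdd E] [Module ℝ E] [ContinuousSMul ℝ E] {f : StrongDual ℝ E} (hf : f ≠ 0)
    (c : ℝ) : interior {x | c ≤ f x} = {x | c < f x} := by
  have := (f.isOpenMap_of_ne_zero hf).preimage_interior_eq_interior_preimage f.continuous
    (Set.Ici c)
  rw [interior_Ici] at this
  exact this.symm

theorem interior_setOf_apply_le {E : Type*} [AddCommGroup E] [TopologicalSpace E]
    [ContinuousAdd E] [Module ℝ E] [ContinuousSMul ℝ E] {f : StrongDual ℝ E} (hf : f ≠ 0)
    (c : ℝ) : interior {x | f x ≤ c} = {x | f x < c} := by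
  have := (f.isOpenMap_of_ne_zero hf).preimage_interior_eq_interior_preimage f.continuous
    (Set.Iic c)
  rw [interior_Iic] at this
  exact this.symm

theorem add_smul_add_smul_mem_convexHull_triple {E : Type*} [AddCommGroup E] [Module ℝ E]
    {u v w : E} {α β γ : ℝ} (hα : 0 ≤ α) (hβ : 0 ≤ β) (hγ : 0 ≤ γ) (h : α + β + γ = 1) :
    α • u + β • v + γ • w ∈ convexHull ℝ {u, v, w} := by
  have := (convex_convexHull ℝ {u, v, w}).sum_mem (t := Finset.univ) (w := ![α, β, γ])
    (z := ![u, v, w]) (by simp [Fin.forall_fin_succ, hα, hβ, hγ]) (by simp [Fin.sum_univ_three, h])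
    (fun i _ ↦ subset_convexHull ℝ _ (by fin_cases i <;> simp))
  simpa [Fin.sum_univ_three, add_assoc] using this

theorem convexHull_image_triple {E F G : Type*} [AddCommGroup E] [Module ℝ E] [AddCommGroup F]
    [Module ℝ F] [FunLike G E F] [LinearMapClass G ℝ E F] (f : G) (u v w : E) :
    convexHull ℝ {f u, f v, f w} = f '' convexHull ℝ {u, v, w} := by
  have := (f : E →ₗ[ℝ] F).image_convexHull {u, v, w}
  simp only [LinearMap.coe_coe, Set.image_insert_eq, Set.image_singleton] at this
  exact this.symm

theorem Homeomorph.interior_image_inter_eq_empty {X Y : Type*} [TopologicalSpace X]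
    [TopologicalSpace Y] (e : X ≃ₜ Y) {s t : Set X} (h : Disjoint (interior s) (interior t)) :
    interior (e '' s) ∩ interior (e '' t) = ∅ := by
  rw [← e.image_interior, ← e.image_interior, ← Set.image_inter e.injective, h.inter_eq,
    Set.image_empty]

-- `Δ` and `∇` of side `r` over the square with corner `(a, b)`, in oblique coordinates.
def upTri (a b r : ℝ) : Set (ℝ × ℝ) :=
  {x | a ≤ x.1 ∧ b ≤ x.2 ∧ x.1 + x.2 ≤ a + b + r}

def downTri (a b r : ℝ) : Set (ℝ × ℝ) :=
  {x | x.1 ≤ a + r ∧ x.2 ≤ b + r ∧ a + b + r ≤ x.1 + x.2}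

theorem convex_upTri (a b r : ℝ) : Convex ℝ (upTri a b r) :=
  (convex_halfSpace_ge (LinearMap.fst ℝ ℝ ℝ).isLinear a).inter <|
    (convex_halfSpace_ge (LinearMap.snd ℝ ℝ ℝ).isLinear b).inter <|
      convex_halfSpace_le (LinearMap.fst ℝ ℝ ℝ + LinearMap.snd ℝ ℝ ℝ).isLinear _

theorem convex_downTri (a b r : ℝ) : Convex ℝ (downTri a b r) :=
  (convex_halfSpace_le (LinearMap.fst ℝ ℝ ℝ).isLinear _).inter <|
    (convex_halfSpace_le (LinearMap.snd ℝ ℝ ℝ).isLinear _).inter <|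
      convex_halfSpace_ge (LinearMap.fst ℝ ℝ ℝ + LinearMap.snd ℝ ℝ ℝ).isLinear _

theorem convexHull_upTri (a b : ℝ) {r : ℝ} (hr : 0 < r) :
    convexHull ℝ {(a, b), (a + r, b), (a, b + r)} = upTri a b r := by
  refine (convexHull_min ?_ (convex_upTri a b r)).antisymm fun x ⟨h₁, h₂, h₃⟩ ↦ ?_
  · rintro _ (rfl | rfl | rfl) <;> refine ⟨?_, ?_, ?_⟩ <;> dsimp only <;> linarith
  have hx : x = (1 - (x.1 - a) / r - (x.2 - b) / r) • (a, b) + ((x.1 - a) / r) • (a + r, b)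
      + ((x.2 - b) / r) • (a, b + r) := by
    ext <;> simp only [Prod.smul_mk, smul_eq_mul, Prod.mk_add_mk] <;> field_simp <;> ring
  rw [hx]
  refine add_smul_add_smul_mem_convexHull_triple ?_ (div_nonneg (by linarith) hr.le)
    (div_nonneg (by linarith) hr.le) (by ring)
  rw [sub_sub, ← add_div, sub_nonneg, div_le_one hr]
  linarith

theorem convexHull_downTri (a b : ℝ) {r : ℝ} (hr : 0 < r) :
    convexHull ℝ {(a + r, b), (a, b + r), (a + r, b + r)} = downTri a b r := by
  refine (convexHull_min ?_ (convex_downTri a b r)).antisymm fun x ⟨h₁, h₂, h₃⟩ ↦ ?_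
  · rintro _ (rfl | rfl | rfl) <;> refine ⟨?_, ?_, ?_⟩ <;> dsimp only <;> linarith
  have hx : x = ((b + r - x.2) / r) • (a + r, b) + ((a + r - x.1) / r) • (a, b + r)
      + ((x.1 + x.2 - a - b - r) / r) • (a + r, b + r) := by
    ext <;> simp only [Prod.smul_mk, smul_eq_mul, Prod.mk_add_mk] <;> field_simp <;> ring
  rw [hx]
  exact add_smul_add_smul_mem_convexHull_triple (div_nonneg (by linarith) hr.le)
    (div_nonneg (by linarith) hr.le) (div_nonneg (by linarith) hr.le) (by field_simp; ring)

theorem interior_upTri (a b r : ℝ) :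
    interior (upTri a b r) = {x | a < x.1 ∧ b < x.2 ∧ x.1 + x.2 < a + b + r} := by
  have h₁ : interior {x : ℝ × ℝ | a ≤ x.1} = {x | a < x.1} :=
    interior_setOf_le_apply (f := .fst ℝ ℝ ℝ) (fun h ↦ by simpa using congr($h (1, 0))) a
  have h₂ : interior {x : ℝ × ℝ | b ≤ x.2} = {x | b < x.2} :=
    interior_setOf_le_apply (f := .snd ℝ ℝ ℝ) (fun h ↦ by simpa using congr($h (0, 1))) b
  have h₃ : interior {x : ℝ × ℝ | x.1 + x.2 ≤ a + b + r} = {x | x.1 + x.2 < a + b + r} :=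
    interior_setOf_apply_le (f := .fst ℝ ℝ ℝ + .snd ℝ ℝ ℝ)
      (fun h ↦ by simpa using congr($h (1, 0))) _
  simp only [upTri, Set.ofPred_and, interior_inter, h₁, h₂, h₃]

theorem interior_downTri (a b r : ℝ) :
    interior (downTri a b r) = {x | x.1 < a + r ∧ x.2 < b + r ∧ a + b + r < x.1 + x.2} := by
  have h₁ : interior {x : ℝ × ℝ | x.1 ≤ a + r} = {x | x.1 < a + r} :=
    interior_setOf_apply_le (f := .fst ℝ ℝ ℝ) (fun h ↦ by simpa using congr($h (1, 0))) _
  have h₂ : interior {x : ℝ × ℝ | x.2 ≤ b + r} = {x | x.2 < b + r} :=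
    interior_setOf_apply_le (f := .snd ℝ ℝ ℝ) (fun h ↦ by simpa using congr($h (0, 1))) _
  have h₃ : interior {x : ℝ × ℝ | a + b + r ≤ x.1 + x.2} = {x | a + b + r < x.1 + x.2} :=
    interior_setOf_le_apply (f := .fst ℝ ℝ ℝ + .snd ℝ ℝ ℝ)
      (fun h ↦ by simpa using congr($h (1, 0))) _
  simp only [downTri, Set.ofPred_and, interior_inter, h₁, h₂, h₃]

theorem floor_eq_of_mem_interior_upTri {i j : ℕ} {x : ℝ × ℝ}
    (hx : x ∈ interior (upTri i j 1)) : ⌊x.1⌋₊ = i ∧ ⌊x.2⌋₊ = j := by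
  obtain ⟨h₁, h₂, h₃⟩ := interior_upTri _ _ _ ▸ hx
  exact ⟨(Nat.floor_eq_iff (i.cast_nonneg.trans h₁.le)).2 ⟨h₁.le, by linarith⟩,
    (Nat.floor_eq_iff (j.cast_nonneg.trans h₂.le)).2 ⟨h₂.le, by linarith⟩⟩

theorem floor_eq_of_mem_interior_downTri {i j : ℕ} {x : ℝ × ℝ}
    (hx : x ∈ interior (downTri i j 1)) : ⌊x.1⌋₊ = i ∧ ⌊x.2⌋₊ = j := by
  obtain ⟨h₁, h₂, h₃⟩ := interior_downTri _ _ _ ▸ hx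
  have : (0 : ℝ) ≤ i := i.cast_nonneg
  have : (0 : ℝ) ≤ j := j.cast_nonneg
  exact ⟨(Nat.floor_eq_iff (by linarith)).2 ⟨by linarith, h₁⟩,
    (Nat.floor_eq_iff (by linarith)).2 ⟨by linarith, h₂⟩⟩

theorem disjoint_interior_upTri {p q : ℕ × ℕ} (hpq : p ≠ q) :
    Disjoint (interior (upTri p.1 p.2 1)) (interior (upTri q.1 q.2 1)) :=
  Set.disjoint_left.2 fun x hp hq ↦ hpq <| by
    obtain ⟨hp₁, hp₂⟩ := floor_eq_of_mem_interior_upTri hp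
    obtain ⟨hq₁, hq₂⟩ := floor_eq_of_mem_interior_upTri hq
    exact Prod.ext (hp₁ ▸ hq₁) (hp₂ ▸ hq₂)

theorem disjoint_interior_downTri {p q : ℕ × ℕ} (hpq : p ≠ q) :
    Disjoint (interior (downTri p.1 p.2 1)) (interior (downTri q.1 q.2 1)) :=
  Set.disjoint_left.2 fun x hp hq ↦ hpq <| by
    obtain ⟨hp₁, hp₂⟩ := floor_eq_of_mem_interior_downTri hp
    obtain ⟨hq₁, hq₂⟩ := floor_eq_of_mem_interior_downTri hq
    exact Prod.ext (hp₁ ▸ hq₁) (hp₂ ▸ hq₂)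

theorem disjoint_interior_upTri_downTri (p q : ℕ × ℕ) :
    Disjoint (interior (upTri p.1 p.2 1)) (interior (downTri q.1 q.2 1)) :=
  Set.disjoint_left.2 fun x hp hq ↦ by
    obtain ⟨hp₁, hp₂⟩ := floor_eq_of_mem_interior_upTri hp
    obtain ⟨hq₁, hq₂⟩ := floor_eq_of_mem_interior_downTri hq
    obtain ⟨-, -, hp₃⟩ := interior_upTri _ _ _ ▸ hp
    obtain ⟨-, -, hq₃⟩ := interior_downTri _ _ _ ▸ hq
    rw [← hp₁, ← hp₂, ← hq₁, ← hq₂] at *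
    linarith

theorem mem_tiles_of_mem_upTri {n : ℕ} (hn : 1 ≤ n) {x : ℝ × ℝ} (hx : x ∈ upTri 0 0 n) :
    (∃ p ∈ {q : ℕ × ℕ | q.1 + q.2 + 1 ≤ n}, x ∈ upTri p.1 p.2 1) ∨
      ∃ p ∈ {q : ℕ × ℕ | q.1 + q.2 + 2 ≤ n}, x ∈ downTri p.1 p.2 1 := by
  obtain ⟨h₁, h₂, h₃⟩ := hx
  set i := ⌊x.1⌋₊
  set j := ⌊x.2⌋₊
  have hi : (i : ℝ) ≤ x.1 := Nat.floor_le h₁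
  have hj : (j : ℝ) ≤ x.2 := Nat.floor_le h₂
  by_cases hs : x.1 + x.2 ≤ i + j + 1
  · left
    -- `p = (i, j)` unless `i + j = n`, i.e. `x = (i, j)` is a grid point on the hypotenuse;
    -- then `x` is a vertex of a tile `p ≤ (i, j)` with `p.1 + p.2 + 1 = n`.
    obtain ⟨p, hp₁, hp₂, hp⟩ :
        ∃ p : ℕ × ℕ, p.1 ≤ i ∧ p.2 ≤ j ∧ p.1 + p.2 + 1 = min (i + j + 1) n :=
      ⟨(min i (n - 1), min j (n - 1 - min i (n - 1))), by omega⟩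
    have hpx : (p.1 : ℝ) + p.2 + 1 = min ((i : ℝ) + j + 1) n := by exact_mod_cast hp
    refine ⟨p, (by omega : p.1 + p.2 + 1 ≤ n), le_trans (by exact_mod_cast hp₁) hi,
      le_trans (by exact_mod_cast hp₂) hj, ?_⟩
    rw [hpx]
    exact le_min hs (by simpa using h₃)
  · right
    refine ⟨(i, j), ?_, (Nat.lt_floor_add_one x.1).le, (Nat.lt_floor_add_one x.2).le, by linarith⟩
    have : (i + j + 1 : ℝ) < n := by linarith
    exact (by exact_mod_cast this : i + j + 1 < n)

theorem upTri_eq_iUnion_tiles {n : ℕ} (hn : 1 ≤ n) :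
    upTri 0 0 n = (⋃ p ∈ {q : ℕ × ℕ | q.1 + q.2 + 1 ≤ n}, upTri p.1 p.2 1) ∪
      ⋃ p ∈ {q : ℕ × ℕ | q.1 + q.2 + 2 ≤ n}, downTri p.1 p.2 1 := by
  refine subset_antisymm (fun x hx ↦ ?_) (Set.union_subset ?_ ?_)
  · simpa only [Set.mem_union, Set.mem_iUnion₂, exists_prop] using mem_tiles_of_mem_upTri hn hx
  · refine Set.iUnion₂_subset fun p (hp : p.1 + p.2 + 1 ≤ n) x ⟨h₁, h₂, h₃⟩ ↦ ?_
    have : ((p.1 + p.2 + 1 : ℕ) : ℝ) ≤ n := by exact_mod_cast hp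
    push_cast at this
    exact ⟨le_trans (by positivity) h₁, le_trans (by positivity) h₂, by linarith⟩
  · refine Set.iUnion₂_subset fun p (hp : p.1 + p.2 + 2 ≤ n) x ⟨h₁, h₂, h₃⟩ ↦ ?_
    have : ((p.1 + p.2 + 2 : ℕ) : ℝ) ≤ n := by exact_mod_cast hp
    push_cast at this
    have : (0 : ℝ) ≤ p.1 := by positivity
    have : (0 : ℝ) ≤ p.2 := by positivity
    exact ⟨by linarith, by linarith, by linarith⟩

noncomputable def obliqueMap (ω : ℂ) : ℝ × ℝ →ₗ[ℝ] ℂ :=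
  (LinearMap.fst ℝ ℝ ℝ).smulRight (1 : ℂ) + (LinearMap.snd ℝ ℝ ℝ).smulRight ω

theorem obliqueMap_apply (ω : ℂ) (x : ℝ × ℝ) : obliqueMap ω x = x.1 + x.2 * ω := by
  simp [obliqueMap, Complex.real_smul]

theorem obliqueMap_injective {ω : ℂ} (hω : ω.im ≠ 0) : Function.Injective (obliqueMap ω) := by
  refine (injective_iff_map_eq_zero _).2 fun x hx ↦ ?_
  rw [obliqueMap_apply] at hx
  have h₂ : x.2 = 0 := by simpa [hω] using congr(Complex.im $hx)
  have h₁ : x.1 = 0 := by simpa [h₂] using congr(Complex.re $hx)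
  exact Prod.ext h₁ h₂

noncomputable def obliqueEquiv (ω : ℂ) (hω : ω.im ≠ 0) : (ℝ × ℝ) ≃L[ℝ] ℂ :=
  ((obliqueMap ω).linearEquivOfInjective (obliqueMap_injective hω)
    (by simp [Complex.finrank_real_complex])).toContinuousLinearEquiv

theorem obliqueEquiv_apply (ω : ℂ) (hω : ω.im ≠ 0) (x : ℝ × ℝ) :
    obliqueEquiv ω hω x = x.1 + x.2 * ω :=
  obliqueMap_apply ω x

theorem dirU_zero : dirU 0 = 1 := by
  simp [dirU]

theorem dirU_one_s13 : dirU 1 = Complex.exp ((Real.pi / 3 : ℝ) * Complex.I) := by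
  simp [dirU]

theorem dirU_one_im_pos : 0 < (dirU 1).im := by
  rw [dirU_one_s13, Complex.exp_ofReal_mul_I_im]
  exact Real.sin_pos_of_pos_of_lt_pi (by positivity) (by linarith [Real.pi_pos])

noncomputable def gridEquiv : (ℝ × ℝ) ≃L[ℝ] ℂ :=
  obliqueEquiv (dirU 1) dirU_one_im_pos.ne'

theorem gridEquiv_apply (a b : ℝ) : gridEquiv (a, b) = a * dirU 0 + b * dirU 1 := by
  simp [gridEquiv, obliqueEquiv_apply, dirU_zero]

theorem Pt_eq_gridEquiv (i j : ℕ) : Pt i j = gridEquiv (i, j) := by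
  simp [Pt, gridEquiv_apply]

theorem upTile_eq_image (i j : ℕ) : upTile i j = gridEquiv '' upTri i j 1 := by
  rw [← convexHull_upTri _ _ one_pos, ← convexHull_image_triple gridEquiv]
  simp [upTile, Pt_eq_gridEquiv]

theorem downTile_eq_image (i j : ℕ) : downTile i j = gridEquiv '' downTri i j 1 := by
  rw [← convexHull_downTri _ _ one_pos, ← convexHull_image_triple gridEquiv]
  simp [downTile, Pt_eq_gridEquiv]

theorem bigTri_eq_image {n : ℕ} (hn : 1 ≤ n) : bigTri n = gridEquiv '' upTri 0 0 n := by
  rw [← convexHull_upTri _ _ (by positivity : (0 : ℝ) < n),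
    ← convexHull_image_triple gridEquiv]
  simp [bigTri, gridEquiv_apply]

theorem two_mul_triNum (n : ℕ) : 2 * triNum n = n * (n + 1) :=
  Nat.mul_div_cancel' (Nat.even_mul_succ_self n).two_dvd

theorem sq_eq_triNum_add_triNum_sub_one (n : ℕ) : n ^ 2 = triNum n + triNum (n - 1) := by
  rcases n with _ | n
  · rfl
  · have h₁ := two_mul_triNum (n + 1)
    have h₂ := two_mul_triNum n
    simp only [Nat.add_sub_cancel]
    nlinarith

/-- For every `n ≥ 1`, the closed triangle with vertices `0`, `n·u(0)`,
`n·u(1)` is the union of the `T_n` upward tiles `Δ(i,j)` (`i + j ≤ n - 1`) and the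
`T_{n-1}` downward tiles `∇(i,j)` (`i + j ≤ n - 2`), these `n²` tiles have pairwise
disjoint interiors, and `n² = T_n + T_{n-1}`. -/
theorem bigTri_eq_union_tiles (n : ℕ) (hn : 1 ≤ n) :
    (bigTri n =
      (⋃ p ∈ {q : ℕ × ℕ | q.1 + q.2 + 1 ≤ n}, upTile p.1 p.2) ∪
      (⋃ p ∈ {q : ℕ × ℕ | q.1 + q.2 + 2 ≤ n}, downTile p.1 p.2)) ∧
    (∀ p q : ℕ × ℕ, p.1 + p.2 + 1 ≤ n → q.1 + q.2 + 1 ≤ n → p ≠ q →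
      interior (upTile p.1 p.2) ∩ interior (upTile q.1 q.2) = ∅) ∧
    (∀ p q : ℕ × ℕ, p.1 + p.2 + 1 ≤ n → q.1 + q.2 + 2 ≤ n →
      interior (upTile p.1 p.2) ∩ interior (downTile q.1 q.2) = ∅) ∧
    (∀ p q : ℕ × ℕ, p.1 + p.2 + 2 ≤ n → q.1 + q.2 + 2 ≤ n → p ≠ q →
      interior (downTile p.1 p.2) ∩ interior (downTile q.1 q.2) = ∅) ∧
    n ^ 2 = triNum n + triNum (n - 1) := by
  refine ⟨?_, fun p q _ _ hpq ↦ ?_, fun p q _ _ ↦ ?_, fun p q _ _ hpq ↦ ?_,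
    sq_eq_triNum_add_triNum_sub_one n⟩
  · simp only [bigTri_eq_image hn, upTri_eq_iUnion_tiles hn, Set.image_union, Set.image_iUnion₂,
      upTile_eq_image, downTile_eq_image]
  · simp only [upTile_eq_image]
    exact gridEquiv.toHomeomorph.interior_image_inter_eq_empty (disjoint_interior_upTri hpq)
  · simp only [upTile_eq_image, downTile_eq_image]
    exact gridEquiv.toHomeomorph.interior_image_inter_eq_empty
      (disjoint_interior_upTri_downTri p q)
  · simp only [downTile_eq_image]
    exact gridEquiv.toHomeomorph.interior_image_inter_eq_empty (disjoint_interior_downTri hpq)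
end
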